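/- arXiv:0810.2513 — 4 statements merged into one kernel-verified Lean document; each statement's English description precedes it below -/
import Mathlib

section
/- Contraction of relaxation time: the relaxation time of the induced chain is at most that of the original chain, i.e. sup over mean-zero ĝ of (∑_k π̂(k) ĝ(k)^2)/D_{Ŵ}(ĝ,ĝ) is at most sup over mean-zero g of (∑_i π(i) g(i)^2)/D_W(g,g). -/
open Finset

variable {A B : Type*} [Fintype A] [Fintype B] [DecidableEq B]

/-- The stationary distribution of the induced chain: `π̂ k = ∑_{i : F i = k} π i`. -/
noncomputable def inducedPi (F : A → B) (π : A → ℝ) (k : B) : ℝ :=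
  ∑ i ∈ Finset.univ.filter (fun i => F i = k), π i

/-- The transition matrix of the induced chain. -/
noncomputable def inducedW (F : A → B) (π : A → ℝ) (W : A → A → ℝ) (k l : B) : ℝ :=
  (1 / inducedPi F π k) *
    ∑ i ∈ Finset.univ.filter (fun i => F i = k),
      ∑ j ∈ Finset.univ.filter (fun j => F j = l), π i * W i j

/-- The Dirichlet form of a chain. -/
noncomputable def dirichlet {S : Type*} [Fintype S]
    (π : S → ℝ) (W : S → S → ℝ) (g : S → ℝ) : ℝ :=
  (1 / 2) * ∑ k, ∑ l, π k * W k l * (g k - g l) ^ 2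


section Aux

variable {A B : Type*} [Fintype A] [Fintype B] [DecidableEq B]

lemma sum_inducedPi_mul (F : A → B) (π : A → ℝ) (f : B → ℝ) :
    ∑ k, inducedPi F π k * f k = ∑ i, π i * f (F i) := by
  rw [← Finset.sum_fiberwise Finset.univ F (fun i => π i * f (F i))]
  refine Finset.sum_congr rfl fun k _ => ?_
  rw [inducedPi, Finset.sum_mul]
  exact Finset.sum_congr rfl fun i hi => by rw [(Finset.mem_filter.mp hi).2]

lemma inducedPi_pos (F : A → B) (π : A → ℝ) (hF : Function.Surjective F)
    (hπpos : ∀ i, 0 < π i) (k : B) : 0 < inducedPi F π k := by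
  obtain ⟨i, hi⟩ := hF k
  exact Finset.sum_pos (fun j _ => hπpos j)
    ⟨i, Finset.mem_filter.mpr ⟨Finset.mem_univ i, hi⟩⟩

lemma dirichlet_induced (F : A → B) (π : A → ℝ) (W : A → A → ℝ)
    (hF : Function.Surjective F) (hπpos : ∀ i, 0 < π i) (g : B → ℝ) :
    dirichlet (inducedPi F π) (inducedW F π W) g = dirichlet π W (fun i => g (F i)) := by
  unfold dirichlet
  congr 1
  calc ∑ k, ∑ l, inducedPi F π k * inducedW F π W k l * (g k - g l) ^ 2
      = ∑ k, ∑ l, ∑ i ∈ Finset.univ.filter (fun i => F i = k),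
          ∑ j ∈ Finset.univ.filter (fun j => F j = l),
            π i * W i j * (g (F i) - g (F j)) ^ 2 := by
        refine Finset.sum_congr rfl fun k _ => Finset.sum_congr rfl fun l _ => ?_
        rw [inducedW]
        have hk := (inducedPi_pos F π hF hπpos k).ne'
        rw [show inducedPi F π k * ((1 / inducedPi F π k) *
            (∑ i ∈ Finset.univ.filter (fun i => F i = k),
              ∑ j ∈ Finset.univ.filter (fun j => F j = l), π i * W i j)) =
            ∑ i ∈ Finset.univ.filter (fun i => F i = k),
              ∑ j ∈ Finset.univ.filter (fun j => F j = l), π i * W i j from by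
          field_simp]
        rw [Finset.sum_mul]
        refine Finset.sum_congr rfl fun i hi => ?_
        rw [Finset.sum_mul]
        refine Finset.sum_congr rfl fun j hj => ?_
        rw [(Finset.mem_filter.mp hi).2, (Finset.mem_filter.mp hj).2]
    _ = ∑ i, ∑ j, π i * W i j * (g (F i) - g (F j)) ^ 2 := by
        rw [← Finset.sum_fiberwise Finset.univ F
          (fun i => ∑ j, π i * W i j * (g (F i) - g (F j)) ^ 2)]
        refine Finset.sum_congr rfl fun k _ => ?_
        rw [Finset.sum_comm]
        refine Finset.sum_congr rfl fun i _ => ?_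
        exact Finset.sum_fiberwise Finset.univ F
          (fun j => π i * W i j * (g (F i) - g (F j)) ^ 2)

lemma dirichlet_nonneg (π : A → ℝ) (W : A → A → ℝ) (hπnn : ∀ i, 0 ≤ π i)
    (hWnn : ∀ i j, 0 ≤ W i j) (g : A → ℝ) : 0 ≤ dirichlet π W g := by
  unfold dirichlet
  refine mul_nonneg (by norm_num) (Finset.sum_nonneg fun k _ =>
    Finset.sum_nonneg fun l _ =>
      mul_nonneg (mul_nonneg (hπnn k) (hWnn k l)) (sq_nonneg _))

lemma dirichlet_smul (π : A → ℝ) (W : A → A → ℝ) (c : ℝ) (g : A → ℝ) :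
    dirichlet π W (fun i => c * g i) = c ^ 2 * dirichlet π W g := by
  unfold dirichlet
  have h : ∀ k l : A, π k * W k l * (c * g k - c * g l) ^ 2 =
      c ^ 2 * (π k * W k l * (g k - g l) ^ 2) := fun k l => by ring
  simp only [h, ← Finset.mul_sum]
  ring

end Aux

/-- Contraction of relaxation time: the variational (extremal) characterization of
the relaxation time of the induced chain is at most that of the original chain. -/
theorem inducedChain_relaxation_le
    (W : A → A → ℝ) (π : A → ℝ) (F : A → B) (hF : Function.Surjective F)
    (hWnn : ∀ i j, 0 ≤ W i j) (hWrow : ∀ i, ∑ j, W i j = 1)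
    (hπpos : ∀ i, 0 < π i) (hπsum : ∑ i, π i = 1)
    (hrev : ∀ i j, π i * W i j = π j * W j i)
    (hergodic : ∀ g : A → ℝ, dirichlet π W g = 0 → ∀ i j, g i = g j) :
    sSup {r : ℝ | ∃ g : B → ℝ, (∑ k, inducedPi F π k * g k = 0) ∧
        (¬ ∀ k l, g k = g l) ∧
        r = (∑ k, inducedPi F π k * (g k) ^ 2) / dirichlet (inducedPi F π) (inducedW F π W) g}
      ≤
    sSup {r : ℝ | ∃ g : A → ℝ, (∑ i, π i * g i = 0) ∧
        (¬ ∀ i j, g i = g j) ∧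
        r = (∑ i, π i * (g i) ^ 2) / dirichlet π W g} := by
  set S₁ : Set ℝ := {r : ℝ | ∃ g : B → ℝ, (∑ k, inducedPi F π k * g k = 0) ∧
      (¬ ∀ k l, g k = g l) ∧
      r = (∑ k, inducedPi F π k * (g k) ^ 2) / dirichlet (inducedPi F π) (inducedW F π W) g}
    with hS₁
  set S₂ : Set ℝ := {r : ℝ | ∃ g : A → ℝ, (∑ i, π i * g i = 0) ∧
      (¬ ∀ i j, g i = g j) ∧
      r = (∑ i, π i * (g i) ^ 2) / dirichlet π W g} with hS₂
  -- Subset: each induced ratio appears among the original ratios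
  have hsub : S₁ ⊆ S₂ := by
    rintro r ⟨g, hmean, hnc, rfl⟩
    refine ⟨fun i => g (F i), ?_, ?_, ?_⟩
    · rw [← sum_inducedPi_mul F π g]; exact hmean
    · intro hc
      push_neg at hnc
      obtain ⟨k, l, hkl⟩ := hnc
      obtain ⟨i, rfl⟩ := hF k
      obtain ⟨j, rfl⟩ := hF l
      exact hkl (hc i j)
    · rw [← sum_inducedPi_mul F π (fun k => g k ^ 2),
        ← dirichlet_induced F π W hF hπpos g]
  -- positivity facts
  have hVar_pos : ∀ g : A → ℝ, (¬ ∀ i j, g i = g j) → 0 < ∑ i, π i * g i ^ 2 := by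
    intro g hg
    have hnn : ∀ i ∈ Finset.univ, (0:ℝ) ≤ π i * g i ^ 2 :=
      fun i _ => mul_nonneg (hπpos i).le (sq_nonneg _)
    rcases (Finset.sum_nonneg hnn).lt_or_eq with h | h
    · exact h
    · exfalso
      have hz := (Finset.sum_eq_zero_iff_of_nonneg hnn).mp h.symm
      have hzero : ∀ i, g i = 0 := by
        intro i
        have := hz i (Finset.mem_univ i)
        rcases mul_eq_zero.mp this with h1 | h2
        · exact absurd h1 (hπpos i).ne'
        · exact pow_eq_zero_iff (by norm_num) |>.mp h2
      exact hg fun i j => by rw [hzero i, hzero j]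
  have hD_pos : ∀ g : A → ℝ, (¬ ∀ i j, g i = g j) → 0 < dirichlet π W g := by
    intro g hg
    rcases (dirichlet_nonneg π W (fun i => (hπpos i).le) hWnn g).lt_or_eq with h | h
    · exact h
    · exact absurd (hergodic g h.symm) hg
  -- elements of S₂ are nonnegative
  have hS₂nn : ∀ r ∈ S₂, (0:ℝ) ≤ r := by
    rintro r ⟨g, _, hnc, rfl⟩
    exact div_nonneg (Finset.sum_nonneg fun i _ => mul_nonneg (hπpos i).le (sq_nonneg _))
      (dirichlet_nonneg π W (fun i => (hπpos i).le) hWnn g)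
  -- normalization
  have normalize : ∀ g : A → ℝ, (∑ i, π i * g i = 0) → (¬ ∀ i j, g i = g j) →
      ∃ h : A → ℝ, ((∑ i, π i * h i = 0) ∧ (∑ i, π i * h i ^ 2 = 1)) ∧
        (∑ i, π i * g i ^ 2) / dirichlet π W g = 1 / dirichlet π W h := by
    intro g hmg hncg
    have hVg : 0 < ∑ i, π i * g i ^ 2 := hVar_pos g hncg
    set v : ℝ := ∑ i, π i * g i ^ 2 with hv
    set s : ℝ := Real.sqrt v with hsdef
    have hs : 0 < s := Real.sqrt_pos.mpr hVg
    have hs2 : s ^ 2 = v := Real.sq_sqrt hVg.le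
    refine ⟨fun i => s⁻¹ * g i, ⟨?_, ?_⟩, ?_⟩
    · have h1 : ∀ i : A, π i * (s⁻¹ * g i) = s⁻¹ * (π i * g i) := fun i => by ring
      simp only [h1, ← Finset.mul_sum, hmg, mul_zero]
    · have h1 : ∀ i : A, π i * (s⁻¹ * g i) ^ 2 = (s⁻¹) ^ 2 * (π i * g i ^ 2) :=
        fun i => by ring
      simp only [h1, ← Finset.mul_sum, ← hv]
      rw [inv_pow, hs2, inv_mul_cancel₀ hVg.ne']
    · rw [dirichlet_smul π W s⁻¹ g, inv_pow, hs2]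
      have hDg : dirichlet π W g ≠ 0 := (hD_pos g hncg).ne'
      field_simp
  -- bounded above whenever nonempty
  have hbdd : S₂.Nonempty → BddAbove S₂ := by
    rintro ⟨r₀, g₀, hm₀, hnc₀, -⟩
    have hAne : Nonempty A := by
      by_contra h
      rw [not_nonempty_iff] at h
      rw [Finset.univ_eq_empty, Finset.sum_empty] at hπsum
      norm_num at hπsum
    set V : Set (A → ℝ) := {g | (∑ i, π i * g i = 0) ∧ (∑ i, π i * g i ^ 2 = 1)} with hV
    -- V is nonempty
    obtain ⟨h₀', hh₀', -⟩ := normalize g₀ hm₀ hnc₀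
    have hVne : V.Nonempty := ⟨h₀', hh₀'⟩
    -- V is closed
    have c1 : Continuous fun g : A → ℝ => ∑ i, π i * g i :=
      continuous_finset_sum _ fun i _ => continuous_const.mul (continuous_apply i)
    have c2 : Continuous fun g : A → ℝ => ∑ i, π i * g i ^ 2 :=
      continuous_finset_sum _ fun i _ => continuous_const.mul ((continuous_apply i).pow 2)
    have hclosed : IsClosed V :=
      (isClosed_eq c1 continuous_const).inter (isClosed_eq c2 continuous_const)
    -- V is bounded
    have hc0 : (0:ℝ) < Finset.univ.inf' Finset.univ_nonempty π :=
      (Finset.lt_inf'_iff _).mpr fun i _ => hπpos i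
    set c : ℝ := Finset.univ.inf' Finset.univ_nonempty π with hc
    have hbound : Bornology.IsBounded V := by
      rw [isBounded_iff_forall_norm_le]
      refine ⟨Real.sqrt (1 / c), fun g hg => ?_⟩
      rw [pi_norm_le_iff_of_nonneg (Real.sqrt_nonneg _)]
      intro i
      rw [Real.norm_eq_abs, ← Real.sqrt_sq_eq_abs]
      refine Real.sqrt_le_sqrt ?_
      have hnn : ∀ j ∈ Finset.univ, (0:ℝ) ≤ π j * g j ^ 2 :=
        fun j _ => mul_nonneg (hπpos j).le (sq_nonneg _)
      have h1 : π i * g i ^ 2 ≤ 1 := by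
        rw [← hg.2]
        exact Finset.single_le_sum hnn (Finset.mem_univ i)
      have h2 : c ≤ π i := Finset.inf'_le _ (Finset.mem_univ i)
      have h3 : c * g i ^ 2 ≤ 1 :=
        le_trans (mul_le_mul_of_nonneg_right h2 (sq_nonneg _)) h1
      rw [le_div_iff₀ hc0, mul_comm]
      exact h3
    have hcompact : IsCompact V := Metric.isCompact_of_isClosed_isBounded hclosed hbound
    -- dirichlet is continuous
    have hDcont : Continuous fun g : A → ℝ => dirichlet π W g := by
      unfold dirichlet
      exact continuous_const.mul (continuous_finset_sum _ fun k _ =>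
        continuous_finset_sum _ fun l _ =>
          (continuous_const.mul (((continuous_apply k).sub (continuous_apply l)).pow 2)))
    obtain ⟨h₀, hh₀V, hmin⟩ := hcompact.exists_isMinOn hVne hDcont.continuousOn
    -- elements of V are nonconstant
    have hVnc : ∀ h ∈ V, ¬ ∀ i j : A, h i = h j := by
      rintro h ⟨hm1, hv1⟩ hall
      obtain ⟨i₀⟩ := hAne
      have hmean : ∑ i, π i * h i = h i₀ := by
        calc ∑ i, π i * h i = ∑ i, π i * h i₀ :=
              Finset.sum_congr rfl fun i _ => by rw [hall i i₀]
          _ = (∑ i, π i) * h i₀ := by rw [Finset.sum_mul]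
          _ = h i₀ := by rw [hπsum, one_mul]
      have hzero : h i₀ = 0 := by rw [← hmean, hm1]
      have : ∑ i, π i * h i ^ 2 = 0 := by
        refine Finset.sum_eq_zero fun i _ => ?_
        rw [hall i i₀, hzero]; ring
      rw [hv1] at this
      norm_num at this
    have hm0 : 0 < dirichlet π W h₀ := hD_pos h₀ (hVnc h₀ hh₀V)
    refine ⟨1 / dirichlet π W h₀, ?_⟩
    rintro r ⟨g, hmg, hncg, rfl⟩
    obtain ⟨h, hhV, heq⟩ := normalize g hmg hncg
    rw [heq]
    exact one_div_le_one_div_of_le hm0 (hmin hhV)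
  rcases Set.eq_empty_or_nonempty S₁ with h | h
  · rw [h, Real.sSup_empty]
    exact Real.sSup_nonneg hS₂nn
  · exact csSup_le_csSup (hbdd (h.mono hsub)) h hsub
end

section
/- General Poincaré/canonical-path bound: let W̄ be a reversible transition matrix with stationary distribution π on a finite state space. Suppose F is a flow satisfying all demands D(i,j) = π(i)π(j), with maximum overload ρ(F) = max_e f(e)/C(e) where C(i,j) = π(i)W̄_{ij} and f(e) is the total flow across edge e, and maximum flow-carrying path length l(F). Then 1/(1 - λ_2(W̄)) ≤ ρ(F) · l(F). -/
open Finset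

private lemma tele_sum {S : Type*} (g : S → ℝ) :
    ∀ (p : List S) (a : S),
      (((a :: p).zip p).map (fun e => g e.2 - g e.1)).sum = g (p.getLastD a) - g a := by
  intro p
  induction p with
  | nil => intro a; simp
  | cons b q ih =>
      intro a
      rw [List.zip_cons_cons, List.map_cons, List.sum_cons, ih b, List.getLastD_cons]
      ring

private lemma getLast?_cons' {S : Type*} : ∀ (t : List S) (a : S),
    (a :: t).getLast? = some (t.getLastD a) := by
  intro t
  induction t with
  | nil => intro a; rfl
  | cons b q ih => intro a; rw [List.getLast?_cons_cons, ih b, List.getLastD_cons]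

private lemma edges_nodup {S : Type*} (p : List S) (hp : p.Nodup) : (p.zip p.tail).Nodup := by
  have hlen : p.tail.length ≤ p.length := by
    rw [List.length_tail]; omega
  have h1 : (p.zip p.tail).map Prod.snd = p.tail := List.map_snd_zip hlen
  have h2 : ((p.zip p.tail).map Prod.snd).Nodup := by rw [h1]; exact hp.tail
  exact h2.of_map _

private lemma list_cs {α : Type*} [DecidableEq α] (l : List α) (hl : l.Nodup) (f : α → ℝ) :
    (l.map f).sum ^ 2 ≤ (l.length : ℝ) * (l.map (fun e => f e ^ 2)).sum := by
  rw [← List.sum_toFinset _ hl, ← List.sum_toFinset _ hl, ← List.toFinset_card_of_nodup hl]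
  exact sq_sum_le_card_mul_sum_sq

private lemma sum_ite_unique_le {α β : Type*} [Fintype α] [Fintype β]
    (P : α → β → Prop) [∀ i j, Decidable (P i j)] (x : ℝ) (hx : 0 ≤ x)
    (huniq : ∀ i j i' j', P i j → P i' j' → i = i' ∧ j = j') :
    (∑ i, ∑ j, if P i j then x else 0) ≤ x := by
  by_cases h : ∃ i j, P i j
  · obtain ⟨i₀, j₀, hP⟩ := h
    rw [Finset.sum_eq_single i₀]
    · rw [Finset.sum_eq_single j₀]
      · simp [hP]
      · intro j _ hj
        rw [if_neg]; intro hPj; exact hj (huniq _ _ _ _ hPj hP).2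
      · intro habs; exact absurd (Finset.mem_univ j₀) habs
    · intro i _ hi
      apply Finset.sum_eq_zero; intro j _
      rw [if_neg]; intro hPij; exact hi (huniq _ _ _ _ hPij hP).1
    · intro habs; exact absurd (Finset.mem_univ i₀) habs
  · push_neg at h
    simp only [h, if_false]
    simpa using hx

/-- General Poincaré / canonical-path bound.  Let `W` be a stochastic matrix reversible
with respect to a positive probability distribution `π` on a finite state space `S`, and
let `lam2` be its second-largest eigenvalue (characterized by the π-weighted Rayleigh
quotient over π-mean-zero vectors).  Suppose a flow is given: a finite set `paths` of
simple directed paths (lists of states) carrying nonnegative flow `F`, satisfying all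
demands `D(i,j) = π i * π j` for `i ≠ j`.  If every edge `(a,b)` used by a
flow-carrying path has load `f(a,b) = ∑ F(p)` over paths through `(a,b)` at most
`ρ · C(a,b)` with capacity `C(a,b) = π a * W a b`, and every flow-carrying path has at
most `len` edges, then `1/(1-lam2) ≤ ρ · len`. -/
theorem poincare_canonical_path_bound
    {S : Type*} [Fintype S] [DecidableEq S]
    (W : S → S → ℝ) (π : S → ℝ)
    (hWnn : ∀ i j, 0 ≤ W i j) (hWrow : ∀ i, ∑ j, W i j = 1)
    (hπpos : ∀ i, 0 < π i) (hπsum : ∑ i, π i = 1)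
    (hrev : ∀ i j, π i * W i j = π j * W j i)
    (lam2 : ℝ)
    (hRayleigh : ∀ g : S → ℝ, ∑ k, π k * g k = 0 →
      ∑ k, ∑ l, π k * W k l * g k * g l ≤ lam2 * ∑ k, π k * (g k) ^ 2)
    (hattained : ∃ g : S → ℝ, g ≠ 0 ∧ ∑ k, π k * g k = 0 ∧
      ∑ k, ∑ l, π k * W k l * g k * g l = lam2 * ∑ k, π k * (g k) ^ 2)
    (paths : Finset (List S)) (F : List S → ℝ)
    (hFnn : ∀ p, 0 ≤ F p)
    (hsimple : ∀ p ∈ paths, p.Nodup)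
    (hdemand : ∀ i j : S, i ≠ j →
      ∑ p ∈ paths.filter (fun p => p.head? = some i ∧ p.getLast? = some j), F p
        = π i * π j)
    (ρ len : ℝ)
    (hload : ∀ a b : S,
      (∃ p ∈ paths, F p ≠ 0 ∧ (a, b) ∈ p.zip p.tail) →
      ∑ p ∈ paths.filter (fun p => (a, b) ∈ p.zip p.tail), F p ≤ ρ * (π a * W a b))
    (hlen : ∀ p ∈ paths, F p ≠ 0 → ((p.length : ℝ) - 1) ≤ len) :
    1 / (1 - lam2) ≤ ρ * len := by
  classical
  obtain ⟨g, hg0, hgmean, hgray⟩ := hattained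
  set V : ℝ := ∑ k, π k * g k ^ 2 with hV
  set T : List S → ℝ := fun p => ((p.zip p.tail).map (fun e => g e.2 - g e.1)).sum ^ 2 with hTdef
  set Esq : List S → ℝ := fun p => ((p.zip p.tail).map (fun e => (g e.2 - g e.1) ^ 2)).sum
    with hEdef
  obtain ⟨k₀, hk₀⟩ : ∃ k, g k ≠ 0 := by
    by_contra h; push_neg at h; exact hg0 (funext h)
  have hVpos : 0 < V := by
    apply Finset.sum_pos' (fun i _ => mul_nonneg (hπpos i).le (sq_nonneg _))
    exact ⟨k₀, Finset.mem_univ k₀,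
      mul_pos (hπpos k₀) (sq_abs (g k₀) ▸ pow_pos (abs_pos.mpr hk₀) 2)⟩
  obtain ⟨i₀, j₀, hij⟩ : ∃ i j : S, i ≠ j := by
    by_contra h; push_neg at h
    have hc : ∑ x, π x * g x = g k₀ := by
      calc ∑ x, π x * g x = ∑ x, π x * g k₀ :=
            Finset.sum_congr rfl (fun x _ => by rw [h x k₀])
        _ = (∑ x, π x) * g k₀ := by rw [Finset.sum_mul]
        _ = g k₀ := by rw [hπsum, one_mul]
    exact hk₀ (hc ▸ hgmean)
  -- positivity of ρ and len
  have hpossum : 0 < ∑ p ∈ paths.filter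
      (fun p => p.head? = some i₀ ∧ p.getLast? = some j₀), F p := by
    rw [hdemand i₀ j₀ hij]; exact mul_pos (hπpos i₀) (hπpos j₀)
  obtain ⟨p₀, hp₀mem, hp₀pos⟩ : ∃ p ∈ paths.filter
      (fun p : List S => p.head? = some i₀ ∧ p.getLast? = some j₀), 0 < F p := by
    by_contra h; push_neg at h
    exact absurd (Finset.sum_nonpos h) (not_le.mpr hpossum)
  have hmf := Finset.mem_filter.mp hp₀mem
  have hp₀paths := hmf.1
  obtain ⟨hhead, hlast⟩ := hmf.2
  obtain ⟨b₀, r₀, rfl⟩ : ∃ b r, p₀ = i₀ :: b :: r := by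
    rcases p₀ with _ | ⟨a, _ | ⟨b, r⟩⟩
    · simp at hhead
    · simp at hhead hlast
      exact absurd (hhead.symm.trans hlast) hij
    · simp at hhead
      exact ⟨b, r, by rw [hhead]⟩
  have hedge0 : (i₀, b₀) ∈ (i₀ :: b₀ :: r₀).zip (i₀ :: b₀ :: r₀).tail := by
    simp [List.zip_cons_cons]
  have hFle : F (i₀ :: b₀ :: r₀) ≤
      ∑ p ∈ paths.filter (fun p => (i₀, b₀) ∈ p.zip p.tail), F p :=
    Finset.single_le_sum (fun p _ => hFnn p)
      (Finset.mem_filter.mpr ⟨hp₀paths, hedge0⟩)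
  have hρC : 0 < ρ * (π i₀ * W i₀ b₀) :=
    lt_of_lt_of_le hp₀pos (hFle.trans (hload i₀ b₀ ⟨_, hp₀paths, hp₀pos.ne', hedge0⟩))
  have hρpos : 0 < ρ := by
    rcases le_or_gt ρ 0 with h | h
    · nlinarith [mul_nonneg (hπpos i₀).le (hWnn i₀ b₀)]
    · exact h
  have hlen1 : (1:ℝ) ≤ len := by
    have h := hlen _ hp₀paths hp₀pos.ne'
    have h2 : ((i₀ :: b₀ :: r₀).length : ℝ) = (r₀.length : ℝ) + 2 := by
      push_cast [List.length_cons]; ring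
    rw [h2] at h
    have h3 : (0:ℝ) ≤ (r₀.length : ℝ) := Nat.cast_nonneg _
    linarith
  -- telescoping
  have hTp : ∀ (p : List S) (i j : S), p.head? = some i → p.getLast? = some j →
      T p = (g i - g j) ^ 2 := by
    intro p i j hh hl
    rcases p with _ | ⟨a, t⟩
    · simp at hh
    · simp only [List.head?_cons, Option.some.injEq] at hh
      subst hh
      rw [getLast?_cons'] at hl
      have hj : t.getLastD a = j := Option.some.inj hl
      simp only [hTdef, List.tail_cons]
      rw [tele_sum g t a, hj]
      ring
  -- Identity A
  have hA : ∑ i, ∑ j, π i * π j * (g i - g j) ^ 2 = 2 * V := by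
    have k1 : ∑ i, ∑ j, π i * g i ^ 2 * π j = V := by
      rw [← Finset.sum_mul_sum, hπsum, mul_one]
    have k2 : ∑ i, ∑ j, π i * g i * (π j * g j) = 0 := by
      rw [← Finset.sum_mul_sum, hgmean, zero_mul]
    have k3 : ∑ i, ∑ j, π i * (π j * g j ^ 2) = V := by
      rw [← Finset.sum_mul_sum, hπsum, one_mul]
    calc ∑ i, ∑ j, π i * π j * (g i - g j) ^ 2
        = ∑ i, ∑ j, (π i * g i ^ 2 * π j - 2 * (π i * g i * (π j * g j))
            + π i * (π j * g j ^ 2)) :=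
          Finset.sum_congr rfl fun i _ => Finset.sum_congr rfl fun j _ => by ring
      _ = (∑ i, ∑ j, π i * g i ^ 2 * π j) - 2 * (∑ i, ∑ j, π i * g i * (π j * g j))
            + ∑ i, ∑ j, π i * (π j * g j ^ 2) := by
          simp only [Finset.sum_add_distrib, Finset.sum_sub_distrib, ← Finset.mul_sum]
      _ = V - 2 * 0 + V := by rw [k1, k2, k3]
      _ = 2 * V := by ring
  -- Identity B
  have hB : (∑ a, ∑ b, π a * W a b * (g b - g a) ^ 2) = 2 * V - 2 * (lam2 * V) := by
    have t1 : ∑ a, ∑ b, π a * W a b * g a ^ 2 = V := by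
      rw [hV]
      refine Finset.sum_congr rfl fun a _ => ?_
      have : ∀ b : S, π a * W a b * g a ^ 2 = π a * g a ^ 2 * W a b := fun b => by ring
      simp_rw [this]
      rw [← Finset.mul_sum, hWrow, mul_one]
    have t2 : ∑ a, ∑ b, π a * W a b * g b ^ 2 = V := by
      have hstep : ∑ a, ∑ b, π a * W a b * g b ^ 2 = ∑ a, ∑ b, π b * W b a * g b ^ 2 :=
        Finset.sum_congr rfl fun a _ => Finset.sum_congr rfl fun b _ => by rw [hrev]
      rw [hstep, Finset.sum_comm, hV]
      refine Finset.sum_congr rfl fun b _ => ?_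
      have : ∀ a : S, π b * W b a * g b ^ 2 = π b * g b ^ 2 * W b a := fun a => by ring
      simp_rw [this]
      rw [← Finset.mul_sum, hWrow, mul_one]
    calc ∑ a, ∑ b, π a * W a b * (g b - g a) ^ 2
        = ∑ a, ∑ b, (π a * W a b * g a ^ 2 - 2 * (π a * W a b * g a * g b)
            + π a * W a b * g b ^ 2) :=
          Finset.sum_congr rfl fun a _ => Finset.sum_congr rfl fun b _ => by ring
      _ = (∑ a, ∑ b, π a * W a b * g a ^ 2)
            - 2 * (∑ a, ∑ b, π a * W a b * g a * g b)
            + (∑ a, ∑ b, π a * W a b * g b ^ 2) := by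
          simp only [Finset.sum_add_distrib, Finset.sum_sub_distrib, ← Finset.mul_sum]
      _ = V - 2 * (lam2 * V) + V := by rw [t1, t2, hgray]
      _ = 2 * V - 2 * (lam2 * V) := by ring
  -- main chain
  have hchain : 2 * V ≤ len * (ρ * ∑ a, ∑ b, π a * W a b * (g b - g a) ^ 2) := by
    rw [← hA]
    have step1 : ∑ i, ∑ j, π i * π j * (g i - g j) ^ 2
        = ∑ i, ∑ j, ∑ p ∈ paths,
            (if i ≠ j ∧ p.head? = some i ∧ p.getLast? = some j then F p * T p else 0) := by
      refine Finset.sum_congr rfl fun i _ => Finset.sum_congr rfl fun j _ => ?_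
      by_cases hij' : i = j
      · subst hij'
        simp
      · rw [← hdemand i j hij', Finset.sum_filter, Finset.sum_mul]
        refine Finset.sum_congr rfl fun p hp => ?_
        rw [ite_mul, zero_mul]
        by_cases hc : p.head? = some i ∧ p.getLast? = some j
        · rw [if_pos hc, if_pos ⟨hij', hc⟩, hTp p i j hc.1 hc.2]
        · rw [if_neg hc, if_neg (fun h => hc h.2)]
    have swap : ∑ i, ∑ j, ∑ p ∈ paths,
          (if i ≠ j ∧ p.head? = some i ∧ p.getLast? = some j then F p * T p else 0)
        = ∑ p ∈ paths, ∑ i, ∑ j,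
          (if i ≠ j ∧ p.head? = some i ∧ p.getLast? = some j then F p * T p else 0) := by
      calc ∑ i, ∑ j, ∑ p ∈ paths, _
          = ∑ i, ∑ p ∈ paths, ∑ j, _ := Finset.sum_congr rfl (fun i _ => Finset.sum_comm)
        _ = ∑ p ∈ paths, ∑ i, ∑ j, _ := Finset.sum_comm
    rw [step1, swap]
    have step2 : ∑ p ∈ paths, ∑ i, ∑ j,
          (if i ≠ j ∧ p.head? = some i ∧ p.getLast? = some j then F p * T p else 0)
        ≤ ∑ p ∈ paths, F p * T p := by
      refine Finset.sum_le_sum fun p hp => ?_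
      exact sum_ite_unique_le _ _ (mul_nonneg (hFnn p) (sq_nonneg _))
        (fun i j i' j' h h' => ⟨Option.some.inj (h.2.1.symm.trans h'.2.1),
          Option.some.inj (h.2.2.symm.trans h'.2.2)⟩)
    have step3 : ∑ p ∈ paths, F p * T p ≤ ∑ p ∈ paths, F p * (len * Esq p) := by
      refine Finset.sum_le_sum fun p hp => ?_
      by_cases hF : F p = 0
      · rw [hF, zero_mul, zero_mul]
      · have hnd := edges_nodup p (hsimple p hp)
        have hEnn : 0 ≤ Esq p := List.sum_nonneg (by
          intro x hx; obtain ⟨e, _, rfl⟩ := List.mem_map.mp hx; exact sq_nonneg _)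
        have hcs : T p ≤ ((p.zip p.tail).length : ℝ) * Esq p := list_cs _ hnd _
        rcases p with _ | ⟨a, t⟩
        · simp [hTdef, hEdef]
        · have hzl : ((a :: t).zip (a :: t).tail).length = t.length := by
            simp [List.length_zip]
          have h1 := hlen _ hp hF
          have h2 : ((a :: t).length : ℝ) - 1 = (t.length : ℝ) := by
            push_cast [List.length_cons]; ring
          have hLlen : ((((a :: t).zip (a :: t).tail).length : ℕ) : ℝ) ≤ len := by
            rw [hzl]; rw [h2] at h1; exact h1
          have hTle : T (a :: t) ≤ len * Esq (a :: t) :=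
            le_trans hcs (mul_le_mul_of_nonneg_right hLlen hEnn)
          exact mul_le_mul_of_nonneg_left hTle (hFnn _)
    have step4 : ∑ p ∈ paths, F p * (len * Esq p) = len * ∑ p ∈ paths, F p * Esq p := by
      rw [Finset.mul_sum]; exact Finset.sum_congr rfl fun p _ => by ring
    have step5 : ∑ p ∈ paths, F p * Esq p
        ≤ ρ * ∑ a, ∑ b, π a * W a b * (g b - g a) ^ 2 := by
      have hEs : ∀ p ∈ paths, F p * Esq p
          = ∑ e : S × S, (if e ∈ p.zip p.tail then F p * (g e.2 - g e.1) ^ 2 else 0) := by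
        intro p hp
        have hnd := edges_nodup p (hsimple p hp)
        have h1 : Esq p = ∑ e ∈ (p.zip p.tail).toFinset, (g e.2 - g e.1) ^ 2 :=
          (List.sum_toFinset _ hnd).symm
        calc F p * Esq p = ∑ e ∈ (p.zip p.tail).toFinset, F p * (g e.2 - g e.1) ^ 2 := by
              rw [h1, Finset.mul_sum]
          _ = ∑ e : S × S, (if e ∈ p.zip p.tail then F p * (g e.2 - g e.1) ^ 2 else 0) := by
              simp_rw [← List.mem_toFinset]
              rw [Finset.sum_ite_mem, Finset.univ_inter]
      calc ∑ p ∈ paths, F p * Esq p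
          = ∑ p ∈ paths, ∑ e : S × S,
              (if e ∈ p.zip p.tail then F p * (g e.2 - g e.1) ^ 2 else 0) :=
            Finset.sum_congr rfl hEs
        _ = ∑ e : S × S, ∑ p ∈ paths,
              (if e ∈ p.zip p.tail then F p * (g e.2 - g e.1) ^ 2 else 0) :=
            Finset.sum_comm
        _ = ∑ e : S × S,
              (∑ p ∈ paths.filter (fun p => e ∈ p.zip p.tail), F p) * (g e.2 - g e.1) ^ 2 := by
            refine Finset.sum_congr rfl fun e _ => ?_
            rw [Finset.sum_filter, Finset.sum_mul]
            exact Finset.sum_congr rfl fun p _ => by rw [ite_mul, zero_mul]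
        _ ≤ ∑ e : S × S, ρ * (π e.1 * W e.1 e.2) * (g e.2 - g e.1) ^ 2 := by
            refine Finset.sum_le_sum ?_
            rintro ⟨a, b⟩ _
            by_cases hc : ∃ p ∈ paths, F p ≠ 0 ∧ (a, b) ∈ p.zip p.tail
            · exact mul_le_mul_of_nonneg_right (hload a b hc) (sq_nonneg _)
            · push_neg at hc
              have hz : ∑ p ∈ paths.filter (fun p => (a, b) ∈ p.zip p.tail), F p = 0 := by
                refine Finset.sum_eq_zero fun p hp => ?_
                obtain ⟨h1, h2⟩ := Finset.mem_filter.mp hp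
                by_contra hne
                exact (hc p h1 hne) h2
              rw [hz, zero_mul]
              exact mul_nonneg (mul_nonneg hρpos.le
                (mul_nonneg (hπpos _).le (hWnn _ _))) (sq_nonneg _)
        _ = ρ * ∑ a, ∑ b, π a * W a b * (g b - g a) ^ 2 := by
            rw [Fintype.sum_prod_type, Finset.mul_sum]
            refine Finset.sum_congr rfl fun a _ => ?_
            rw [Finset.mul_sum]
            refine Finset.sum_congr rfl fun b _ => ?_
            dsimp only
            ring
    calc ∑ p ∈ paths, ∑ i, ∑ j,
          (if i ≠ j ∧ p.head? = some i ∧ p.getLast? = some j then F p * T p else 0)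
        ≤ ∑ p ∈ paths, F p * T p := step2
      _ ≤ ∑ p ∈ paths, F p * (len * Esq p) := step3
      _ = len * ∑ p ∈ paths, F p * Esq p := step4
      _ ≤ len * (ρ * ∑ a, ∑ b, π a * W a b * (g b - g a) ^ 2) :=
          mul_le_mul_of_nonneg_left step5 (by linarith)
  rw [hB] at hchain
  have hρlen : 0 < ρ * len := mul_pos hρpos (by linarith)
  have h1 : 1 ≤ ρ * len * (1 - lam2) := by nlinarith [hVpos, hchain]
  have h2 : 0 < 1 - lam2 := by nlinarith [hρlen, h1]
  rw [div_le_iff₀ h2]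
  linarith [h1]
end

section
/- Test-function lower bound for the torus-plus-hub chain: let the chain have states being the N×N discrete torus plus a hub M, with stationary probability Θ(1/(m+n)) on each torus node (n = N^2) and Θ(m/(m+n)) on M, transition probability a/(m+n) from each torus node to M and transitions b/n between torus neighbors. Taking g(M)=0 and g constant on columns with column values running linearly from -α to α and back (α = Θ(N)), adjusted to have π-mean zero, the ratio (∑_k π(k)g(k)^2)/D(g,g) is Ω(n^2/m) when a = Θ(m/n) and b = Θ(1). -/
open Finset

/-- Two nodes of the `N × N` discrete torus are neighbours. -/
def torusNbr (N : ℕ) (v w : ZMod N × ZMod N) : Prop :=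
  (v.1 = w.1 ∧ (w.2 = v.2 + 1 ∨ v.2 = w.2 + 1)) ∨
  (v.2 = w.2 ∧ (w.1 = v.1 + 1 ∨ v.1 = w.1 + 1))

instance torusNbr.instDecidable (N : ℕ) (v w : ZMod N × ZMod N) :
    Decidable (torusNbr N v w) := by
  unfold torusNbr; infer_instance

/-- The column-linear (triangle-wave) profile on a cycle of length `N`, with values
running linearly from `-N/4` up to about `N/4` and back: `tri c = min(c, N-c) - N/4`. -/
noncomputable def triProfile (N : ℕ) [NeZero N] (c : ZMod N) : ℝ :=
  (min c.val (N - c.val) : ℝ) - (N : ℝ) / 4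

private lemma val_add_one (N : ℕ) [NeZero N] (hN : 2 ≤ N) (c : ZMod N) :
    (c + 1).val = (c.val + 1) % N := by
  haveI : Fact (1 < N) := ⟨by omega⟩
  rw [ZMod.val_add, ZMod.val_one]

private lemma tri_step_sq (N : ℕ) [NeZero N] (hN : 2 ≤ N) (c : ZMod N) :
    (triProfile N (c + 1) - triProfile N c) ^ 2 ≤ 1 := by
  have hc : c.val < N := ZMod.val_lt c
  have hval : (c + 1).val = (c.val + 1) % N := val_add_one N hN c
  unfold triProfile
  rcases Nat.lt_or_ge (c.val + 1) N with h | h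
  · have h1 : (c + 1).val = c.val + 1 := by rw [hval, Nat.mod_eq_of_lt h]
    rw [h1]
    have hx0 : (0:ℝ) ≤ (c.val : ℝ) := Nat.cast_nonneg _
    have hxN : (c.val : ℝ) + 1 ≤ N := by exact_mod_cast h.le
    push_cast
    rcases le_total ((c.val:ℝ) + 1) ((N:ℝ) - ((c.val:ℝ)+1)) with h2 | h2 <;>
      rcases le_total ((c.val:ℝ)) ((N:ℝ) - (c.val:ℝ)) with h3 | h3 <;>
      [rw [min_eq_left h2, min_eq_left h3]; rw [min_eq_left h2, min_eq_right h3];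
       rw [min_eq_right h2, min_eq_left h3]; rw [min_eq_right h2, min_eq_right h3]] <;>
      nlinarith
  · have hcN : c.val + 1 = N := by omega
    have h1 : (c + 1).val = 0 := by rw [hval, hcN, Nat.mod_self]
    rw [h1]
    have hcv : (c.val : ℝ) = (N : ℝ) - 1 := by
      have : (c.val : ℝ) + 1 = N := by exact_mod_cast hcN
      linarith
    rw [hcv]
    have hN' : (2:ℝ) ≤ N := by exact_mod_cast hN
    rw [Nat.cast_zero, min_eq_left (by linarith : (0:ℝ) ≤ (N:ℝ) - 0),
        min_eq_right (by linarith : (N:ℝ) - ((N:ℝ)-1) ≤ (N:ℝ) - 1)]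
    nlinarith

private lemma tri_sq_le (N : ℕ) [NeZero N] (c : ZMod N) :
    (triProfile N c) ^ 2 ≤ (N : ℝ) ^ 2 / 16 := by
  unfold triProfile
  have hc : (c.val : ℝ) < N := by exact_mod_cast ZMod.val_lt c
  have hc0 : (0:ℝ) ≤ c.val := Nat.cast_nonneg _
  rcases le_total ((c.val : ℝ)) ((N:ℝ) - c.val) with h | h <;>
    [rw [min_eq_left h]; rw [min_eq_right h]] <;> nlinarith

/-- For torus neighbours the squared difference of the column profile is at most 1. -/
private lemma tri_nbr_sq (N : ℕ) [NeZero N] (hN : 2 ≤ N) (v w : ZMod N × ZMod N)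
    (hnb : torusNbr N v w) :
    (triProfile N v.2 - triProfile N w.2) ^ 2 ≤ 1 := by
  rcases hnb with ⟨_, h | h⟩ | ⟨h, _⟩
  · rw [h]
    have := tri_step_sq N hN v.2
    nlinarith [this]
  · rw [h]
    have := tri_step_sq N hN w.2
    nlinarith [this]
  · rw [h, sub_self]
    norm_num

private lemma tri_at (N : ℕ) [NeZero N] (j : ℕ) (hj2 : 2 * j ≤ N) :
    triProfile N (j : ZMod N) = (j : ℝ) - (N : ℝ) / 4 := by
  have hjN' : j < N := by
    have := NeZero.ne N
    omega
  unfold triProfile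
  rw [ZMod.val_natCast_of_lt hjN']
  rw [min_eq_left]
  have : (j:ℝ) + j ≤ N := by exact_mod_cast (show j + j ≤ N by omega)
  linarith

private lemma tri_anticonc (N : ℕ) [NeZero N] (hN : 2 ≤ N) (c : ℝ) :
    (N : ℝ)^3 / 1024 ≤ ∑ x : ZMod N, (triProfile N x - c) ^ 2 := by
  classical
  set Q := N / 8 + 1 with hQ
  set f : ZMod N → ℝ := fun x => (triProfile N x - c) ^ 2 with hf
  have hf0 : ∀ x, 0 ≤ f x := fun x => sq_nonneg _
  set φ : ℕ → ZMod N := fun j => (j : ZMod N) with hφ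
  set ψ : ℕ → ZMod N := fun j => ((N / 2 - j : ℕ) : ZMod N) with hψ
  have hjlt : ∀ j ∈ range Q, j < N := by intro j hj; rw [mem_range] at hj; omega
  have hklt : ∀ j ∈ range Q, N / 2 - j < N := by intro j hj; omega
  have hφval : ∀ j ∈ range Q, (φ j).val = j := fun j hj => ZMod.val_natCast_of_lt (hjlt j hj)
  have hψval : ∀ j ∈ range Q, (ψ j).val = N / 2 - j := fun j hj =>
    ZMod.val_natCast_of_lt (hklt j hj)
  have hφinj : Set.InjOn φ (range Q) := by
    intro i hi j hj h
    have := congrArg ZMod.val h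
    rwa [hφval i hi, hφval j hj] at this
  have hψinj : Set.InjOn ψ (range Q) := by
    intro i hi j hj h
    have := congrArg ZMod.val h
    rw [hψval i hi, hψval j hj] at this
    have hi' := mem_range.mp hi; have hj' := mem_range.mp hj
    omega
  have hdisj : Disjoint ((range Q).image φ) ((range Q).image ψ) := by
    rw [disjoint_left]
    intro x hx hy
    obtain ⟨i, hi, rfl⟩ := mem_image.mp hx
    obtain ⟨j, hj, hji⟩ := mem_image.mp hy
    have := congrArg ZMod.val hji
    rw [hψval j hj, hφval i hi] at this
    have hi' := mem_range.mp hi; have hj' := mem_range.mp hj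
    omega
  have hpair : ∀ j ∈ range Q, (N:ℝ)^2 / 128 ≤ f (φ j) + f (ψ j) := by
    intro j hj
    have hj' := mem_range.mp hj
    have h1 : triProfile N (φ j) = (j : ℝ) - (N : ℝ) / 4 := tri_at N j (by omega)
    have h2 : triProfile N (ψ j) = ((N / 2 - j : ℕ) : ℝ) - (N : ℝ) / 4 := tri_at N _ (by omega)
    have hgap : (N : ℝ) / 8 ≤ ((N / 2 - j : ℕ) : ℝ) - (j : ℝ) := by
      have h8 : (j : ℝ) + (N:ℝ)/8 ≤ ((N/2 - j : ℕ) : ℝ) := by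
        have hh : 8 * j + N ≤ 8 * (N / 2 - j) := by omega
        have := (Nat.cast_le (α := ℝ)).mpr hh
        push_cast at this
        linarith
      linarith
    rw [hf]
    simp only
    rw [h1, h2]
    have hN8 : (0:ℝ) ≤ (N:ℝ)/8 := by positivity
    nlinarith [sq_nonneg (((j:ℝ) - (N:ℝ)/4 - c) + (((N/2 - j:ℕ):ℝ) - (N:ℝ)/4 - c))]
  have hQreal : (N : ℝ) / 8 ≤ (Q : ℝ) := by
    have h8 : (N:ℝ) ≤ 8 * (Q:ℝ) := by exact_mod_cast (show N ≤ 8 * Q by omega)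
    linarith
  calc (N : ℝ)^3 / 1024 = ((N:ℝ)/8) * ((N:ℝ)^2/128) := by ring
    _ ≤ (Q : ℝ) * ((N:ℝ)^2/128) := by
        apply mul_le_mul_of_nonneg_right hQreal; positivity
    _ = ∑ _j ∈ range Q, (N:ℝ)^2/128 := by rw [sum_const, card_range, nsmul_eq_mul]
    _ ≤ ∑ j ∈ range Q, (f (φ j) + f (ψ j)) := sum_le_sum hpair
    _ = ∑ j ∈ range Q, f (φ j) + ∑ j ∈ range Q, f (ψ j) := sum_add_distrib
    _ = ∑ x ∈ (range Q).image φ, f x + ∑ x ∈ (range Q).image ψ, f x := by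
        rw [sum_image (fun i hi j hj => hφinj hi hj), sum_image (fun i hi j hj => hψinj hi hj)]
    _ = ∑ x ∈ (range Q).image φ ∪ (range Q).image ψ, f x := (sum_union hdisj).symm
    _ ≤ ∑ x : ZMod N, f x := sum_le_sum_of_subset_of_nonneg (subset_univ _) (fun x _ _ => hf0 x)

private lemma mul3_le {x X y Y z Z : ℝ} (hx : 0 ≤ x) (hy : 0 ≤ y) (hz : 0 ≤ z)
    (hX : x ≤ X) (hY : y ≤ Y) (hZ : z ≤ Z) : x * y * z ≤ X * Y * Z :=
  mul_le_mul (mul_le_mul hX hY hy (hx.trans hX)) hZ hz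
    (mul_nonneg (hx.trans hX) (hy.trans hY))

private lemma nbr_card (N : ℕ) [NeZero N] (v : ZMod N × ZMod N) :
    (Finset.univ.filter (fun w => torusNbr N v w)).card ≤ 4 := by
  have hsub : (Finset.univ.filter (fun w => torusNbr N v w)) ⊆
      {(v.1, v.2 + 1), (v.1, v.2 - 1), (v.1 + 1, v.2), (v.1 - 1, v.2)} := by
    intro w hw
    rw [mem_filter] at hw
    rcases hw.2 with ⟨h1, h2 | h2⟩ | ⟨h1, h2 | h2⟩ <;>
      simp only [mem_insert, mem_singleton, Prod.ext_iff]
    · exact Or.inl ⟨h1.symm, h2⟩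
    · refine Or.inr (Or.inl ⟨h1.symm, ?_⟩)
      rw [h2]; ring
    · refine Or.inr (Or.inr (Or.inl ⟨h2, h1.symm⟩))
    · refine Or.inr (Or.inr (Or.inr ⟨?_, h1.symm⟩))
      rw [h2]; ring
  calc (Finset.univ.filter (fun w => torusNbr N v w)).card
      ≤ ({(v.1, v.2 + 1), (v.1, v.2 - 1), (v.1 + 1, v.2), (v.1 - 1, v.2)} :
          Finset (ZMod N × ZMod N)).card := Finset.card_le_card hsub
    _ ≤ 4 := by
        have h1 := Finset.card_insert_le (v.1, v.2 + 1)
          ({(v.1, v.2 - 1), (v.1 + 1, v.2), (v.1 - 1, v.2)} : Finset (ZMod N × ZMod N))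
        have h2 := Finset.card_insert_le (v.1, v.2 - 1)
          ({(v.1 + 1, v.2), (v.1 - 1, v.2)} : Finset (ZMod N × ZMod N))
        have h3 := Finset.card_insert_le (v.1 + 1, v.2)
          ({(v.1 - 1, v.2)} : Finset (ZMod N × ZMod N))
        have h4 : ({(v.1 - 1, v.2)} : Finset (ZMod N × ZMod N)).card = 1 :=
          Finset.card_singleton _
        omega
set_option maxHeartbeats 1000000 in
/-- Test-function lower bound for the torus-plus-hub chain.  The states are the `N × N`
torus (`n = N²` nodes) plus a hub `M`; the stationary probability is `Θ(1/(m+n))` on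
each torus node and `Θ(m/(m+n))` on `M`; the transition probability from a torus node to
`M` is `a/(m+n)` with `a = Θ(m/n)`, transitions between torus neighbours are `b/n` with
`b = Θ(1)`, and there are no other transitions off the diagonal.  Taking `g(M) = 0` and
`g` constant on columns with the column values running linearly from `-α` to `α` and
back (`α = Θ(N)`), adjusted to have `π`-mean zero, the Rayleigh ratio
`(∑ π g²)/D(g,g)` is `Ω(n²/m)`. -/
theorem torus_plus_hub_test_function_bound
    (cπ Cπ ca Ca cb Cb : ℝ) (hcπ : 0 < cπ) (hCπ : 0 < Cπ) (hca : 0 < ca)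
    (hCa : 0 < Ca) (hcb : 0 < cb) (hCb : 0 < Cb) :
    ∃ K : ℝ, 0 < K ∧
      ∀ (N : ℕ) (_ : NeZero N), 2 ≤ N →
      ∀ (m : ℕ), 1 ≤ m → (m : ℝ) ≤ ((N : ℝ) ^ 2) →
      ∀ (π : (ZMod N × ZMod N) ⊕ Unit → ℝ)
        (W : ((ZMod N × ZMod N) ⊕ Unit) → ((ZMod N × ZMod N) ⊕ Unit) → ℝ)
        (a b : ℝ),
      -- abbreviate n = N²
      (∀ v : ZMod N × ZMod N,
          cπ / ((m : ℝ) + (N : ℝ) ^ 2) ≤ π (Sum.inl v) ∧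
          π (Sum.inl v) ≤ Cπ / ((m : ℝ) + (N : ℝ) ^ 2)) →
      (cπ * m / ((m : ℝ) + (N : ℝ) ^ 2) ≤ π (Sum.inr ()) ∧
          π (Sum.inr ()) ≤ Cπ * m / ((m : ℝ) + (N : ℝ) ^ 2)) →
      (∀ s t, 0 ≤ W s t) →
      (∀ s, ∑ t, W s t = 1) →
      (∀ s t, π s * W s t = π t * W t s) →
      (∀ v : ZMod N × ZMod N, W (Sum.inl v) (Sum.inr ()) = a / ((m : ℝ) + (N : ℝ) ^ 2)) →
      (ca * m / (N : ℝ) ^ 2 ≤ a ∧ a ≤ Ca * m / (N : ℝ) ^ 2) →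
      (∀ v w : ZMod N × ZMod N, torusNbr N v w →
          W (Sum.inl v) (Sum.inl w) = b / (N : ℝ) ^ 2) →
      (cb ≤ b ∧ b ≤ Cb) →
      (∀ v w : ZMod N × ZMod N, v ≠ w → ¬ torusNbr N v w →
          W (Sum.inl v) (Sum.inl w) = 0) →
      -- the mean-zero adjusted column-linear test function
      (let g₀ : (ZMod N × ZMod N) ⊕ Unit → ℝ :=
          fun s => Sum.elim (fun v => triProfile N v.2) (fun _ => 0) s
        let c₀ : ℝ := ∑ s, π s * g₀ s
        let g : (ZMod N × ZMod N) ⊕ Unit → ℝ := fun s => g₀ s - c₀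
        ((1 / 2) * ∑ s, ∑ t, π s * W s t * (g s - g t) ^ 2) *
            (K * ((N : ℝ) ^ 2) ^ 2 / m)
          ≤ ∑ s, π s * g s ^ 2) := by
  have hC' : 0 < Cπ * (2 * Cb + Ca / 16) := by positivity
  refine ⟨cπ / (1024 * (Cπ * (2 * Cb + Ca / 16))), by positivity, ?_⟩
  intro N instN hN2 m hm1 hmN π W a b hπt hπM hW0 hWrow hrev hWhub ha hWnbr hb hWoff
  intro g₀ c₀ g
  have hNR : (2:ℝ) ≤ (N:ℝ) := by exact_mod_cast hN2
  have hN0 : (0:ℝ) < (N:ℝ) := by linarith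
  have hmR : (1:ℝ) ≤ (m:ℝ) := by exact_mod_cast hm1
  have hm0 : (0:ℝ) < (m:ℝ) := by linarith
  set S : ℝ := (m:ℝ) + (N:ℝ)^2 with hSdef
  have hS0 : (0:ℝ) < S := by rw [hSdef]; nlinarith
  have hNS : (N:ℝ)^2 ≤ S := by rw [hSdef]; nlinarith
  clear_value S
  have hb0 : 0 ≤ b := le_trans hcb.le hb.1
  have ha0 : 0 ≤ a := le_trans (by positivity) ha.1
  have hπ0 : ∀ v, 0 ≤ π (Sum.inl v) := fun v => le_trans (by positivity) (hπt v).1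
  have hginl : ∀ v : ZMod N × ZMod N, g (Sum.inl v) = triProfile N v.2 - c₀ := fun v => rfl
  have hdiff : ∀ s t, g s - g t = g₀ s - g₀ t := fun s t => by
    show (g₀ s - c₀) - (g₀ t - c₀) = g₀ s - g₀ t
    ring
  -- variance lower bound
  have hVar : cπ * (N:ℝ)^4 / (1024 * S) ≤ ∑ s, π s * g s ^ 2 := by
    have hterm : ∀ v : ZMod N × ZMod N,
        cπ / S * (triProfile N v.2 - c₀)^2 ≤ π (Sum.inl v) * g (Sum.inl v)^2 := by
      intro v
      rw [hginl]
      exact mul_le_mul_of_nonneg_right (hπt v).1 (sq_nonneg _)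
    have hhub : 0 ≤ π (Sum.inr ()) * g (Sum.inr ())^2 := by
      apply mul_nonneg _ (sq_nonneg _)
      refine le_trans ?_ hπM.1
      positivity
    have hprod : ∑ v : ZMod N × ZMod N, cπ / S * (triProfile N v.2 - c₀)^2
        = (N:ℝ) * ∑ x : ZMod N, cπ / S * (triProfile N x - c₀)^2 := by
      rw [Fintype.sum_prod_type]
      dsimp only
      rw [Finset.sum_const, Finset.card_univ, ZMod.card, nsmul_eq_mul]
    have hmul : ∑ x : ZMod N, cπ / S * (triProfile N x - c₀)^2
        = cπ / S * ∑ x : ZMod N, (triProfile N x - c₀)^2 := (Finset.mul_sum _ _ _).symm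
    have hlow : cπ * (N:ℝ)^4 / (1024 * S)
        ≤ ∑ v : ZMod N × ZMod N, cπ / S * (triProfile N v.2 - c₀)^2 := by
      rw [hprod, hmul]
      calc cπ * (N:ℝ)^4 / (1024 * S) = (N:ℝ) * (cπ / S * ((N:ℝ)^3 / 1024)) := by
            field_simp
        _ ≤ (N:ℝ) * (cπ / S * ∑ x : ZMod N, (triProfile N x - c₀)^2) := by
            apply mul_le_mul_of_nonneg_left _ hN0.le
            apply mul_le_mul_of_nonneg_left (tri_anticonc N hN2 c₀) (by positivity)
    calc cπ * (N:ℝ)^4 / (1024 * S)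
        ≤ ∑ v : ZMod N × ZMod N, cπ / S * (triProfile N v.2 - c₀)^2 := hlow
      _ ≤ ∑ v : ZMod N × ZMod N, π (Sum.inl v) * g (Sum.inl v)^2 :=
          Finset.sum_le_sum (fun v _ => hterm v)
      _ ≤ (∑ v : ZMod N × ZMod N, π (Sum.inl v) * g (Sum.inl v)^2)
            + π (Sum.inr ()) * g (Sum.inr ())^2 := by linarith
      _ = ∑ s, π s * g s ^ 2 := by
          rw [Fintype.sum_sum_type]
          simp
  -- Dirichlet form upper bound
  have hDexp : (∑ s, ∑ t, π s * W s t * (g s - g t) ^ 2)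
      = (∑ v, ∑ w, π (Sum.inl v) * W (Sum.inl v) (Sum.inl w)
            * (g (Sum.inl v) - g (Sum.inl w))^2)
      + (∑ v, π (Sum.inl v) * W (Sum.inl v) (Sum.inr ())
            * (g (Sum.inl v) - g (Sum.inr ()))^2)
      + ((∑ w, π (Sum.inr ()) * W (Sum.inr ()) (Sum.inl w)
            * (g (Sum.inr ()) - g (Sum.inl w))^2)
      + π (Sum.inr ()) * W (Sum.inr ()) (Sum.inr ())
            * (g (Sum.inr ()) - g (Sum.inr ()))^2) := by
    rw [Fintype.sum_sum_type]
    congr 1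
    · rw [← Finset.sum_add_distrib]
      apply Finset.sum_congr rfl
      intro v _
      rw [Fintype.sum_sum_type]
      simp
    · simp [Fintype.sum_sum_type]
  have hP1 : (∑ v, ∑ w, π (Sum.inl v) * W (Sum.inl v) (Sum.inl w)
      * (g (Sum.inl v) - g (Sum.inl w))^2) ≤ 4 * Cπ * Cb / S := by
    have hterm : ∀ v w : ZMod N × ZMod N,
        π (Sum.inl v) * W (Sum.inl v) (Sum.inl w) * (g (Sum.inl v) - g (Sum.inl w))^2
          ≤ if torusNbr N v w then Cπ / S * (Cb / (N:ℝ)^2) * 1 else 0 := by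
      intro v w
      by_cases hnb : torusNbr N v w
      · rw [if_pos hnb, hWnbr v w hnb]
        have hd : (g (Sum.inl v) - g (Sum.inl w))^2
            = (triProfile N v.2 - triProfile N w.2)^2 := by rw [hdiff]; rfl
        rw [hd]
        refine mul3_le (hπ0 v) (by positivity) (sq_nonneg _) (hπt v).2 ?_
          (tri_nbr_sq N hN2 v w hnb)
        exact div_le_div_of_nonneg_right hb.2 (by positivity)
      · rw [if_neg hnb]
        by_cases hvw : v = w
        · subst hvw
          rw [sub_self]
          simp
        · rw [hWoff v w hvw hnb]
          simp
    have hrow : ∀ v : ZMod N × ZMod N,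
        (∑ w, if torusNbr N v w then Cπ / S * (Cb / (N:ℝ)^2) * 1 else 0)
          ≤ 4 * (Cπ / S * (Cb / (N:ℝ)^2)) := by
      intro v
      rw [← Finset.sum_filter, Finset.sum_const, nsmul_eq_mul, mul_one]
      have hC : (0:ℝ) ≤ Cπ / S * (Cb / (N:ℝ)^2) := by positivity
      have hcard : ((Finset.univ.filter (fun w => torusNbr N v w)).card : ℝ) ≤ 4 := by
        exact_mod_cast nbr_card N v
      exact mul_le_mul_of_nonneg_right hcard hC
    calc (∑ v, ∑ w, π (Sum.inl v) * W (Sum.inl v) (Sum.inl w)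
          * (g (Sum.inl v) - g (Sum.inl w))^2)
        ≤ ∑ v : ZMod N × ZMod N, ∑ w, if torusNbr N v w
            then Cπ / S * (Cb / (N:ℝ)^2) * 1 else 0 :=
          Finset.sum_le_sum (fun v _ => Finset.sum_le_sum (fun w _ => hterm v w))
      _ ≤ ∑ _v : ZMod N × ZMod N, 4 * (Cπ / S * (Cb / (N:ℝ)^2)) :=
          Finset.sum_le_sum (fun v _ => hrow v)
      _ = ((N : ℝ) * (N : ℝ)) * (4 * (Cπ / S * (Cb / (N:ℝ)^2))) := by
          rw [Finset.sum_const, Finset.card_univ, Fintype.card_prod, ZMod.card, nsmul_eq_mul]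
          push_cast
          ring
      _ = 4 * Cπ * Cb / S := by field_simp
  have hP2 : (∑ v, π (Sum.inl v) * W (Sum.inl v) (Sum.inr ())
      * (g (Sum.inl v) - g (Sum.inr ()))^2) ≤ Cπ * Ca * (m:ℝ) / (16 * S) := by
    have hterm : ∀ v : ZMod N × ZMod N,
        π (Sum.inl v) * W (Sum.inl v) (Sum.inr ()) * (g (Sum.inl v) - g (Sum.inr ()))^2
          ≤ Cπ / S * ((Ca * m / (N:ℝ)^2) / S) * ((N:ℝ)^2 / 16) := by
      intro v
      rw [hWhub v]
      have hd : (g (Sum.inl v) - g (Sum.inr ()))^2 = (triProfile N v.2)^2 := by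
        rw [hdiff]
        show (triProfile N v.2 - 0)^2 = _
        ring
      rw [hd]
      refine mul3_le (hπ0 v) (by positivity) (sq_nonneg _) (hπt v).2 ?_ (tri_sq_le N v.2)
      exact div_le_div_of_nonneg_right ha.2 hS0.le
    calc (∑ v, π (Sum.inl v) * W (Sum.inl v) (Sum.inr ())
          * (g (Sum.inl v) - g (Sum.inr ()))^2)
        ≤ ∑ _v : ZMod N × ZMod N, Cπ / S * ((Ca * m / (N:ℝ)^2) / S) * ((N:ℝ)^2 / 16) :=
          Finset.sum_le_sum (fun v _ => hterm v)
      _ = ((N : ℝ) * (N : ℝ)) * (Cπ / S * ((Ca * m / (N:ℝ)^2) / S) * ((N:ℝ)^2 / 16)) := by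
          rw [Finset.sum_const, Finset.card_univ, Fintype.card_prod, ZMod.card, nsmul_eq_mul]
          push_cast
          ring
      _ = Cπ * Ca * (m:ℝ) * (N:ℝ)^2 / (16 * S^2) := by field_simp
      _ ≤ Cπ * Ca * (m:ℝ) / (16 * S) := by
          rw [div_le_div_iff₀ (by positivity) (by positivity)]
          nlinarith [mul_nonneg (mul_nonneg (mul_nonneg hCπ.le hCa.le) hm0.le) (mul_nonneg hS0.le (sub_nonneg.mpr hNS))]
  have hP3 : (∑ w, π (Sum.inr ()) * W (Sum.inr ()) (Sum.inl w)
      * (g (Sum.inr ()) - g (Sum.inl w))^2)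
      = ∑ w, π (Sum.inl w) * W (Sum.inl w) (Sum.inr ())
          * (g (Sum.inl w) - g (Sum.inr ()))^2 := by
    apply Finset.sum_congr rfl
    intro w _
    rw [hrev (Sum.inr ()) (Sum.inl w)]
    ring
  have hP4 : π (Sum.inr ()) * W (Sum.inr ()) (Sum.inr ())
      * (g (Sum.inr ()) - g (Sum.inr ()))^2 = 0 := by
    rw [sub_self]
    ring
  have hDtot : (∑ s, ∑ t, π s * W s t * (g s - g t) ^ 2)
      ≤ 2 * (Cπ * (2 * Cb + Ca / 16)) * (m:ℝ) / S := by
    rw [hDexp, hP3, hP4]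
    have h1 : 4 * Cπ * Cb / S ≤ 4 * Cπ * Cb * (m:ℝ) / S := by
      apply div_le_div_of_nonneg_right _ hS0.le
      nlinarith [mul_nonneg (mul_nonneg hCπ.le hCb.le) (sub_nonneg.mpr hmR)]
    have hEq : 2 * (Cπ * (2 * Cb + Ca / 16)) * (m:ℝ) / S
        = 4 * Cπ * Cb * (m:ℝ) / S + 2 * (Cπ * Ca * (m:ℝ) / (16 * S)) := by ring
    linarith
  -- combine
  have hfac : (0:ℝ) ≤ cπ / (1024 * (Cπ * (2 * Cb + Ca / 16))) * ((N:ℝ)^2)^2 / (m:ℝ) := by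
    positivity
  have hC'ne : Cπ * (2 * Cb + Ca / 16) ≠ 0 := ne_of_gt hC'
  have hSne : S ≠ 0 := ne_of_gt hS0
  have hmne : (m:ℝ) ≠ 0 := ne_of_gt hm0
  calc ((1 / 2) * ∑ s, ∑ t, π s * W s t * (g s - g t) ^ 2)
        * (cπ / (1024 * (Cπ * (2 * Cb + Ca / 16))) * ((N:ℝ)^2)^2 / (m:ℝ))
      ≤ ((1 / 2) * (2 * (Cπ * (2 * Cb + Ca / 16)) * (m:ℝ) / S))
        * (cπ / (1024 * (Cπ * (2 * Cb + Ca / 16))) * ((N:ℝ)^2)^2 / (m:ℝ)) := by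
        apply mul_le_mul_of_nonneg_right _ hfac
        linarith
    _ = cπ * (N:ℝ)^4 / (1024 * S) := by field_simp
    _ ≤ ∑ s, π s * g s ^ 2 := hVar
end

section
/- If the expected gossip matrix satisfies W̄ symmetric stochastic with 1/(1-λ_2(W̄)) ≤ T, then for any ε > 0, after t = C·T·log(1/ε) iterations (for a universal constant C), E[‖x(t) - x̄1‖^2] ≤ ε^2 ‖x(0)‖^2, where x(t) = W(t)···W(1)x(0) with i.i.d. symmetric projection matrices W(s) satisfying E[W(s)] = W̄ and W(s)^T W(s) = W(s). -/
open Finset Matrix MeasureTheory ProbabilityTheory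

private lemma gossip_integrable_of_bounded {Ω : Type} [MeasurableSpace Ω] {P : Measure Ω}
    [IsProbabilityMeasure P] {f : Ω → ℝ} (hf : Measurable f) (C : ℝ)
    (hC : ∀ ω, |f ω| ≤ C) : Integrable f P :=
  (integrable_const C).mono' hf.aestronglyMeasurable
    (ae_of_all _ fun ω => by simpa [Real.norm_eq_abs] using hC ω)

/-- Convergence of gossip from the spectral gap: there is a universal constant `C` such
that if the expected gossip matrix `W̄` is symmetric stochastic with relaxation time
`1/(1-λ₂(W̄)) ≤ T`, and `x(t) = W(t)⋯W(1)x(0)` where the `W(s)` are i.i.d. random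
symmetric idempotent stochastic matrices fixing the all-ones vector with mean `W̄`, then
for every `0 < ε < 1` and every `t ≥ C·T·log(1/ε)` one has
`E[‖x(t) - x̄1‖²] ≤ ε² ‖x(0)‖²`. -/
theorem gossip_convergence_from_relaxation_time :
    ∃ C : ℝ, 0 < C ∧
      ∀ (n : ℕ) (_ : 1 ≤ n)
        (Ω : Type) (_ : MeasurableSpace Ω) (P : Measure Ω) (_ : IsProbabilityMeasure P)
        (Wseq : ℕ → Ω → (Fin n → Fin n → ℝ))
        (Wbar : Matrix (Fin n) (Fin n) ℝ) (lam2 T : ℝ),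
        (∀ s, Measurable (Wseq s)) →
        (ProbabilityTheory.iIndepFun Wseq P) →
        (∀ s ω, (Matrix.of (Wseq s ω))ᵀ = Matrix.of (Wseq s ω)) →
        (∀ s ω, Matrix.of (Wseq s ω) * Matrix.of (Wseq s ω) = Matrix.of (Wseq s ω)) →
        (∀ s ω k l, 0 ≤ Wseq s ω k l) →
        (∀ s ω, (Matrix.of (Wseq s ω)).mulVec (fun _ => 1) = fun _ => 1) →
        (∀ s k l, ∫ ω, Wseq s ω k l ∂P = Wbar k l) →
        (∀ y : Fin n → ℝ, ∑ k, y k = 0 →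
          y ⬝ᵥ Wbar.mulVec y ≤ lam2 * ∑ k, (y k) ^ 2) →
        lam2 < 1 →
        1 / (1 - lam2) ≤ T →
        ∀ (x0 : Fin n → ℝ) (ε : ℝ), 0 < ε → ε < 1 →
        ∀ t : ℕ, C * T * Real.log (1 / ε) ≤ t →
          (∫ ω, ∑ k, ((Nat.rec (motive := fun _ => Ω → Fin n → ℝ)
                (fun _ => x0)
                (fun s x ω => (Matrix.of (Wseq (s + 1) ω)).mulVec (x ω)) t) ω k
              - (∑ l, x0 l) / n) ^ 2 ∂P)
            ≤ ε ^ 2 * ∑ k, (x0 k) ^ 2 := by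
  refine ⟨2, by norm_num, ?_⟩
  intro n hn Ω mΩ P hP Wseq Wbar lam2 T hWmeas hindep hsym hidem hpos hones hmean hquad
    hlam2lt hT x0 ε hε0 hε1 t ht
  set m : ℝ := (∑ l, x0 l) / n with hm
  set x : ℕ → Ω → Fin n → ℝ := fun u => Nat.rec (motive := fun _ => Ω → Fin n → ℝ)
      (fun _ => x0) (fun s x ω => (Matrix.of (Wseq (s + 1) ω)).mulVec (x ω)) u with hxdef
  set y : ℕ → Ω → Fin n → ℝ := fun u ω k => x u ω k - m with hydef
  -- basic entrywise facts about the random matrices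
  have hrow : ∀ s ω k, ∑ l, Wseq s ω k l = 1 := by
    intro s ω k
    have := congrFun (hones s ω) k
    simpa [Matrix.mulVec, dotProduct] using this
  have hsymm' : ∀ s ω k l, Wseq s ω k l = Wseq s ω l k := by
    intro s ω k l
    have := congrFun (congrFun (hsym s ω) l) k
    simpa [Matrix.transpose_apply] using this
  have hle1 : ∀ s ω k l, Wseq s ω k l ≤ 1 := by
    intro s ω k l
    rw [← hrow s ω k]
    exact Finset.single_le_sum (fun j _ => hpos s ω k j) (Finset.mem_univ l)
  have hWent : ∀ s k l, Measurable (fun ω => Wseq s ω k l) := fun s k l =>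
    (measurable_pi_apply l).comp ((measurable_pi_apply k).comp (hWmeas s))
  have hcol : ∀ s ω l, ∑ k, Wseq s ω k l = 1 := by
    intro s ω l
    rw [Finset.sum_congr rfl fun k _ => hsymm' s ω k l]
    exact hrow s ω l
  have hquadpt : ∀ s ω (v : Fin n → ℝ),
      v ⬝ᵥ (Matrix.of (Wseq s ω)).mulVec v
        = ∑ k, ((Matrix.of (Wseq s ω)).mulVec v k) ^ 2 := by
    intro s ω v
    calc v ⬝ᵥ (Matrix.of (Wseq s ω)).mulVec v
        = v ⬝ᵥ (Matrix.of (Wseq s ω) * Matrix.of (Wseq s ω)).mulVec v := by rw [hidem]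
      _ = v ⬝ᵥ (Matrix.of (Wseq s ω)).mulVec ((Matrix.of (Wseq s ω)).mulVec v) := by
            rw [Matrix.mulVec_mulVec]
      _ = ((Matrix.of (Wseq s ω)).mulVec v) ⬝ᵥ ((Matrix.of (Wseq s ω)).mulVec v) := by
            rw [dotProduct_mulVec, ← Matrix.mulVec_transpose, hsym]
      _ = ∑ k, ((Matrix.of (Wseq s ω)).mulVec v k) ^ 2 := by
            simp [dotProduct, sq]
  -- properties of the random trajectory
  have hxe : ∀ u ω k, x (u + 1) ω k = ∑ l, Wseq (u + 1) ω k l * x u ω l := by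
    intro u ω k
    show (Matrix.of (Wseq (u + 1) ω)).mulVec (x u ω) k = _
    simp [Matrix.mulVec, dotProduct]
  have hxmeas : ∀ u, Measurable (x u) := by
    intro u
    induction u with
    | zero => exact measurable_const
    | succ s ih =>
      apply measurable_pi_lambda
      intro k
      simp only [hxe]
      exact Finset.measurable_sum _ fun l _ =>
        (hWent (s + 1) k l).mul ((measurable_pi_apply l).comp ih)
  set M : ℝ := ∑ k, |x0 k| with hM
  have hM0 : 0 ≤ M := Finset.sum_nonneg fun k _ => abs_nonneg _
  have hxb : ∀ u ω k, |x u ω k| ≤ M := by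
    intro u
    induction u with
    | zero => exact fun ω k =>
        Finset.single_le_sum (fun j _ => abs_nonneg (x0 j)) (Finset.mem_univ k)
    | succ s ih =>
      intro ω k
      rw [hxe]
      calc |∑ l, Wseq (s + 1) ω k l * x s ω l| ≤ ∑ l, |Wseq (s + 1) ω k l * x s ω l| :=
              Finset.abs_sum_le_sum_abs _ _
        _ ≤ ∑ l, Wseq (s + 1) ω k l * M := by
              refine Finset.sum_le_sum fun l _ => ?_
              rw [abs_mul, abs_of_nonneg (hpos (s + 1) ω k l)]
              exact mul_le_mul_of_nonneg_left (ih ω l) (hpos (s + 1) ω k l)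
        _ = M := by rw [← Finset.sum_mul, hrow, one_mul]
  have hsumx : ∀ u ω, ∑ k, x u ω k = ∑ k, x0 k := by
    intro u
    induction u with
    | zero => intro ω; rfl
    | succ s ih =>
      intro ω
      calc ∑ k, x (s + 1) ω k = ∑ k, ∑ l, Wseq (s + 1) ω k l * x s ω l :=
              Finset.sum_congr rfl fun k _ => hxe s ω k
        _ = ∑ l, (∑ k, Wseq (s + 1) ω k l) * x s ω l := by
              rw [Finset.sum_comm]; simp [Finset.sum_mul]
        _ = ∑ l, x s ω l := by simp [hcol]
        _ = ∑ k, x0 k := ih ω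
  have hncast : (0:ℝ) < (n:ℝ) := by exact_mod_cast Nat.lt_of_lt_of_le Nat.zero_lt_one hn
  have hsum0 : ∀ u ω, ∑ k, y u ω k = 0 := by
    intro u ω
    simp only [hydef]
    rw [Finset.sum_sub_distrib, hsumx, Finset.sum_const, Finset.card_univ, Fintype.card_fin,
      nsmul_eq_mul, hm]
    field_simp
    ring
  have hyrec : ∀ u ω, y (u + 1) ω = (Matrix.of (Wseq (u + 1) ω)).mulVec (y u ω) := by
    intro u ω
    funext k
    show x (u + 1) ω k - m = _
    rw [hxe]
    simp only [Matrix.mulVec, dotProduct, Matrix.of_apply, hydef, mul_sub,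
      Finset.sum_sub_distrib, ← Finset.sum_mul, hrow, one_mul]
  -- independence of `x u` from `Wseq (u+1)`
  set g : ℕ → (ℕ → Fin n → Fin n → ℝ) → Fin n → ℝ := fun u =>
      Nat.rec (motive := fun _ => (ℕ → Fin n → Fin n → ℝ) → Fin n → ℝ)
        (fun _ => x0) (fun s g W => (Matrix.of (W (s + 1))).mulVec (g W)) u with hgdef
  have hxg : ∀ u ω, x u ω = g u (fun s => Wseq s ω) := by
    intro u ω
    induction u with
    | zero => rfl
    | succ s ih => show (Matrix.of (Wseq (s + 1) ω)).mulVec (x s ω) = _; rw [ih]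
  have hgmeas : ∀ u, Measurable (g u) := by
    intro u
    induction u with
    | zero => exact measurable_const
    | succ s ih =>
      apply measurable_pi_lambda
      intro k
      have : (fun (W : ℕ → Fin n → Fin n → ℝ) => g (s + 1) W k)
          = fun W => ∑ l, W (s + 1) k l * g s W l := by
        funext W; simp [Matrix.mulVec, dotProduct, hgdef]
      rw [this]
      exact Finset.measurable_sum _ fun l _ =>
        ((measurable_pi_apply l).comp
          ((measurable_pi_apply k).comp (measurable_pi_apply (s + 1)))).mul
          ((measurable_pi_apply l).comp ih)
  have hgdep : ∀ u (W W' : ℕ → Fin n → Fin n → ℝ),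
      (∀ s ∈ Finset.Icc 1 u, W s = W' s) → g u W = g u W' := by
    intro u
    induction u with
    | zero => intro W W' _; rfl
    | succ s ih =>
      intro W W' h
      show (Matrix.of (W (s + 1))).mulVec (g s W) = (Matrix.of (W' (s + 1))).mulVec (g s W')
      rw [h (s + 1) (by simp [Finset.mem_Icc]), ih W W' fun j hj => h j (by
        simp only [Finset.mem_Icc] at hj ⊢; omega)]
  have hindX : ∀ u, IndepFun (x u) (Wseq (u + 1)) P := by
    intro u
    have hdisj : Disjoint (Finset.Icc 1 u) ({u + 1} : Finset ℕ) := by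
      simp [Finset.disjoint_singleton_right, Finset.mem_Icc]
    have h := hindep.indepFun_finset (Finset.Icc 1 u) {u + 1} hdisj hWmeas
    set φ : ((Finset.Icc 1 u : Finset ℕ) → Fin n → Fin n → ℝ) → Fin n → ℝ := fun v =>
      g u (fun s => if hs : s ∈ Finset.Icc 1 u then v ⟨s, hs⟩ else fun _ _ => 0) with hφ
    set ψ : (({u + 1} : Finset ℕ) → Fin n → Fin n → ℝ) → Fin n → Fin n → ℝ := fun v =>
      v ⟨u + 1, Finset.mem_singleton_self _⟩ with hψ
    have hφm : Measurable φ := by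
      apply (hgmeas u).comp
      apply measurable_pi_lambda
      intro s
      by_cases hs : s ∈ Finset.Icc 1 u
      · simpa [hs] using measurable_pi_apply (⟨s, hs⟩ : (Finset.Icc 1 u : Finset ℕ))
      · simpa [hs] using @measurable_const (Fin n → Fin n → ℝ) _ _ _ (fun _ _ => 0)
    have hψm : Measurable ψ := measurable_pi_apply _
    have hcomp := h.comp hφm hψm
    have heq1 : (φ ∘ fun a (i : (Finset.Icc 1 u : Finset ℕ)) => Wseq i a) = x u := by
      funext a
      show g u _ = x u a
      rw [hxg u a]
      apply hgdep
      intro s hs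
      simp [hs]
    have heq2 : (ψ ∘ fun a (i : ({u + 1} : Finset ℕ)) => Wseq i a) = Wseq (u + 1) := rfl
    rwa [heq1, heq2] at hcomp
  -- integrability toolbox
  set μ : ℝ := max lam2 0 with hμdef
  set B : ℝ := M + |m| with hBdef
  have hB0 : 0 ≤ B := add_nonneg hM0 (abs_nonneg m)
  have hymeas : ∀ u k, Measurable (fun ω => y u ω k) := by
    intro u k; rw [hydef]
    exact ((measurable_pi_apply k).comp (hxmeas u)).sub measurable_const
  have hyb : ∀ u ω k, |y u ω k| ≤ B := by
    intro u ω k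
    rw [hydef]
    calc |x u ω k - m| ≤ |x u ω k| + |m| := abs_sub _ _
      _ ≤ M + |m| := by linarith [hxb u ω k]
  have hyyint : ∀ u k l, Integrable (fun ω => y u ω k * y u ω l) P := by
    intro u k l
    refine gossip_integrable_of_bounded ((hymeas u k).mul (hymeas u l)) (B * B) fun ω => ?_
    rw [abs_mul]
    exact mul_le_mul (hyb u ω k) (hyb u ω l) (abs_nonneg _) hB0
  have hWint : ∀ s k l, Integrable (fun ω => Wseq s ω k l) P := fun s k l =>
    gossip_integrable_of_bounded (hWent s k l) 1 fun ω =>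
      abs_le.2 ⟨by linarith [hpos s ω k l], hle1 s ω k l⟩
  have htermint : ∀ u k l, Integrable (fun ω => y u ω k * y u ω l * Wseq (u + 1) ω k l) P := by
    intro u k l
    refine gossip_integrable_of_bounded (((hymeas u k).mul (hymeas u l)).mul
      (hWent (u + 1) k l)) (B * B * 1) fun ω => ?_
    rw [abs_mul, abs_mul]
    exact mul_le_mul (mul_le_mul (hyb u ω k) (hyb u ω l) (abs_nonneg _) hB0)
      (abs_le.2 ⟨by linarith [hpos (u + 1) ω k l], hle1 (u + 1) ω k l⟩) (abs_nonneg _)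
      (mul_nonneg hB0 hB0)
  have hdot : ∀ (v : Fin n → ℝ) (A : Matrix (Fin n) (Fin n) ℝ),
      ∑ k, ∑ l, v k * v l * A k l = v ⬝ᵥ A.mulVec v := by
    intro v A
    simp only [dotProduct, Matrix.mulVec, Finset.mul_sum]
    exact Finset.sum_congr rfl fun k _ => Finset.sum_congr rfl fun l _ => by ring
  have hsqint : ∀ u, Integrable (fun ω => ∑ k, (y u ω k) ^ 2) P := by
    intro u
    have hmeas : Measurable (fun ω => ∑ k, (y u ω k) ^ 2) := by
      refine Finset.measurable_sum _ fun k _ => ?_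
      have : (fun ω => (y u ω k) ^ 2) = fun ω => y u ω k * y u ω k := by
        funext ω; ring
      rw [this]; exact (hymeas u k).mul (hymeas u k)
    refine gossip_integrable_of_bounded hmeas ((n : ℝ) * B ^ 2) fun ω => ?_
    calc |∑ k, (y u ω k) ^ 2| ≤ ∑ k, |(y u ω k) ^ 2| := Finset.abs_sum_le_sum_abs _ _
      _ ≤ ∑ _k : Fin n, B ^ 2 := Finset.sum_le_sum fun k _ => by
            rw [abs_pow]; exact pow_le_pow_left₀ (abs_nonneg _) (hyb u ω k) 2
      _ = (n : ℝ) * B ^ 2 := by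
            rw [Finset.sum_const, Finset.card_univ, Fintype.card_fin, nsmul_eq_mul]
  -- the one-step contraction
  have hstep : ∀ u, ∫ ω, ∑ k, (y (u + 1) ω k) ^ 2 ∂P
      ≤ μ * ∫ ω, ∑ k, (y u ω k) ^ 2 ∂P := by
    intro u
    have hpt : ∀ ω, ∑ k, (y (u + 1) ω k) ^ 2
        = ∑ k, ∑ l, y u ω k * y u ω l * Wseq (u + 1) ω k l := by
      intro ω
      have h1 : ∑ k, (y (u + 1) ω k) ^ 2
          = (y u ω) ⬝ᵥ (Matrix.of (Wseq (u + 1) ω)).mulVec (y u ω) := by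
        rw [hquadpt]
        exact Finset.sum_congr rfl fun k _ => by rw [hyrec u ω]
      rw [h1, ← hdot (y u ω) (Matrix.of (Wseq (u + 1) ω))]
      rfl
    have hik : ∀ k l, IndepFun (fun ω => y u ω k * y u ω l)
        (fun ω => Wseq (u + 1) ω k l) P := by
      intro k l
      have hφ : Measurable (fun v : Fin n → ℝ => (v k - m) * (v l - m)) :=
        ((measurable_pi_apply k).sub measurable_const).mul
          ((measurable_pi_apply l).sub measurable_const)
      have hψ : Measurable (fun W : Fin n → Fin n → ℝ => W k l) :=
        (measurable_pi_apply l).comp (measurable_pi_apply k)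
      have h := (hindX u).comp hφ hψ
      have he : ((fun v : Fin n → ℝ => (v k - m) * (v l - m)) ∘ x u)
          = fun ω => y u ω k * y u ω l := by
        funext ω; rw [hydef]; rfl
      rwa [he] at h
    calc ∫ ω, ∑ k, (y (u + 1) ω k) ^ 2 ∂P
        = ∫ ω, ∑ k, ∑ l, y u ω k * y u ω l * Wseq (u + 1) ω k l ∂P :=
          integral_congr_ae (ae_of_all _ hpt)
      _ = ∑ k, ∑ l, ∫ ω, y u ω k * y u ω l * Wseq (u + 1) ω k l ∂P := by
          rw [integral_finset_sum _ fun k _ =>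
            integrable_finset_sum _ fun l _ => htermint u k l]
          exact Finset.sum_congr rfl fun k _ =>
            integral_finset_sum _ fun l _ => htermint u k l
      _ = ∑ k, ∑ l, (∫ ω, y u ω k * y u ω l ∂P) * Wbar k l := by
          refine Finset.sum_congr rfl fun k _ => Finset.sum_congr rfl fun l _ => ?_
          rw [← hmean (u + 1) k l]
          exact (hik k l).integral_fun_mul_eq_mul_integral (hyyint u k l).aestronglyMeasurable (hWint (u + 1) k l).aestronglyMeasurable
      _ = ∑ k, ∑ l, ∫ ω, y u ω k * y u ω l * Wbar k l ∂P :=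
          Finset.sum_congr rfl fun k _ => Finset.sum_congr rfl fun l _ =>
            (integral_mul_const _ _).symm
      _ = ∫ ω, ∑ k, ∑ l, y u ω k * y u ω l * Wbar k l ∂P := by
          rw [integral_finset_sum _ fun k _ =>
            integrable_finset_sum _ fun l _ => (hyyint u k l).mul_const (Wbar k l)]
          exact Finset.sum_congr rfl fun k _ =>
            (integral_finset_sum _ fun l _ => (hyyint u k l).mul_const _).symm
      _ ≤ ∫ ω, μ * ∑ k, (y u ω k) ^ 2 ∂P := by
          refine integral_mono (integrable_finset_sum _ fun k _ =>
            integrable_finset_sum _ fun l _ => (hyyint u k l).mul_const _)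
            ((hsqint u).const_mul μ) fun ω => ?_
          have h1 := hquad (y u ω) (hsum0 u ω)
          have h2 : ∑ k, ∑ l, y u ω k * y u ω l * Wbar k l
              = (y u ω) ⬝ᵥ Wbar.mulVec (y u ω) := hdot _ _
          have h3 : lam2 * ∑ k, (y u ω k) ^ 2 ≤ μ * ∑ k, (y u ω k) ^ 2 :=
            mul_le_mul_of_nonneg_right (le_max_left _ _)
              (Finset.sum_nonneg fun k _ => sq_nonneg _)
          simp only [h2]
          linarith
      _ = μ * ∫ ω, ∑ k, (y u ω k) ^ 2 ∂P := integral_const_mul μ _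
  -- iterate the contraction
  set I0 : ℝ := ∑ k, (x0 k - m) ^ 2 with hI0def
  have hy0e : ∀ (ω : Ω) k, y 0 ω k = x0 k - m := fun ω k => by rw [hydef]; rfl
  have hμ0 : 0 ≤ μ := le_max_right _ _
  have hiter : ∀ u, ∫ ω, ∑ k, (y u ω k) ^ 2 ∂P ≤ μ ^ u * I0 := by
    intro u
    induction u with
    | zero =>
      have : (fun ω => ∑ k, (y 0 ω k) ^ 2) = fun _ : Ω => I0 := by
        funext ω; exact Finset.sum_congr rfl fun k _ => by rw [hy0e]
      rw [this, integral_const]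
      simp
    | succ s ih =>
      calc ∫ ω, ∑ k, (y (s + 1) ω k) ^ 2 ∂P ≤ μ * ∫ ω, ∑ k, (y s ω k) ^ 2 ∂P := hstep s
        _ ≤ μ * (μ ^ s * I0) := mul_le_mul_of_nonneg_left ih hμ0
        _ = μ ^ (s + 1) * I0 := by ring
  have hI0nonneg : 0 ≤ I0 := Finset.sum_nonneg fun k _ => sq_nonneg _
  have hsx : ∑ k, x0 k = n * m := by rw [hm]; field_simp
  have hI0le : I0 ≤ ∑ k, (x0 k) ^ 2 := by
    have e1 : ∀ k : Fin n, (x0 k - m) ^ 2 = x0 k ^ 2 - 2 * m * x0 k + m ^ 2 :=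
      fun k => by ring
    calc I0 = ∑ k, (x0 k ^ 2 - 2 * m * x0 k + m ^ 2) :=
          Finset.sum_congr rfl fun k _ => e1 k
      _ = (∑ k, x0 k ^ 2) - 2 * m * (∑ k, x0 k) + n * m ^ 2 := by
          rw [Finset.sum_add_distrib, Finset.sum_sub_distrib, ← Finset.mul_sum,
            Finset.sum_const, Finset.card_univ, Fintype.card_fin, nsmul_eq_mul]
      _ ≤ ∑ k, x0 k ^ 2 := by
          rw [hsx]
          nlinarith [mul_nonneg hncast.le (sq_nonneg m)]
  have main : (∫ ω, ∑ k, (y t ω k) ^ 2 ∂P) ≤ ε ^ 2 * ∑ k, (x0 k) ^ 2 := by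
    rcases eq_or_lt_of_le hI0nonneg with hzero | hIpos
    · refine (hiter t).trans ?_
      rw [← hzero, mul_zero]
      positivity
    · -- then `lam2 ≥ 0`, so `μ = lam2`
      have hsum00 : ∑ k, (x0 k - m) = 0 := by
        rw [Finset.sum_sub_distrib, Finset.sum_const, Finset.card_univ, Fintype.card_fin,
          nsmul_eq_mul, hsx]
        exact sub_self _
      have hbar : (0:ℝ) ≤ (fun k => x0 k - m) ⬝ᵥ Wbar.mulVec (fun k => x0 k - m) := by
        set v : Fin n → ℝ := fun k => x0 k - m with hv
        have h1 : v ⬝ᵥ Wbar.mulVec v = ∫ ω, v ⬝ᵥ (Matrix.of (Wseq 1 ω)).mulVec v ∂P := by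
          rw [← hdot]
          calc ∑ k, ∑ l, v k * v l * Wbar k l
              = ∑ k, ∑ l, ∫ ω, v k * v l * Wseq 1 ω k l ∂P := by
                refine Finset.sum_congr rfl fun k _ => Finset.sum_congr rfl fun l _ => ?_
                rw [← hmean 1 k l]
                exact (integral_const_mul (v k * v l) _).symm
            _ = ∫ ω, ∑ k, ∑ l, v k * v l * Wseq 1 ω k l ∂P := by
                rw [integral_finset_sum _ fun k _ => integrable_finset_sum _ fun l _ =>
                  (hWint 1 k l).const_mul _]
                exact Finset.sum_congr rfl fun k _ =>
                  (integral_finset_sum _ fun l _ => (hWint 1 k l).const_mul _).symm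
            _ = ∫ ω, v ⬝ᵥ (Matrix.of (Wseq 1 ω)).mulVec v ∂P := by
                refine integral_congr_ae (ae_of_all _ fun ω => ?_)
                show (∑ k, ∑ l, v k * v l * Wseq 1 ω k l)
                  = v ⬝ᵥ (Matrix.of (Wseq 1 ω)).mulVec v
                rw [← hdot]
                rfl
        rw [h1]
        refine integral_nonneg fun ω => ?_
        rw [hquadpt]
        exact Finset.sum_nonneg fun k _ => sq_nonneg _
      have hq := hquad (fun k => x0 k - m) hsum00
      have hlam2nonneg : 0 ≤ lam2 := by
        by_contra hneg
        push_neg at hneg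
        have : lam2 * ∑ k, (x0 k - m) ^ 2 < 0 :=
          mul_neg_of_neg_of_pos hneg (by rw [← hI0def]; exact hIpos)
        linarith
      have hμeq : μ = lam2 := max_eq_left hlam2nonneg
      have hTpos : 0 < T := by
        refine lt_of_lt_of_le ?_ hT
        have h1l : (0:ℝ) < 1 - lam2 := by linarith
        positivity
      have h1T : 1 / T ≤ 1 - lam2 := by
        rw [div_le_iff₀ hTpos]
        have h2 := (div_le_iff₀ (by linarith : (0:ℝ) < 1 - lam2)).mp hT
        nlinarith
      have hexp1 : lam2 ≤ Real.exp (-(1 / T)) := by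
        have := Real.add_one_le_exp (-(1 / T))
        linarith
      have hpow : lam2 ^ t ≤ ε ^ 2 := by
        calc lam2 ^ t ≤ (Real.exp (-(1 / T))) ^ t := pow_le_pow_left₀ hlam2nonneg hexp1 t
          _ = Real.exp (-(t / T)) := by rw [← Real.exp_nat_mul]; congr 1; ring
          _ ≤ ε ^ 2 := by
              rw [← Real.exp_log (show (0:ℝ) < ε ^ 2 by positivity)]
              apply Real.exp_le_exp.mpr
              have hlog : Real.log (ε ^ 2) = 2 * Real.log ε := by
                rw [Real.log_pow]; push_cast; ring
              have hlog1 : Real.log (1 / ε) = -Real.log ε := by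
                rw [one_div, Real.log_inv]
              rw [hlog1] at ht
              rw [hlog, neg_le, ← neg_mul, le_div_iff₀ hTpos]
              have hr : -2 * Real.log ε * T = 2 * T * -Real.log ε := by ring
              linarith
      calc ∫ ω, ∑ k, (y t ω k) ^ 2 ∂P ≤ μ ^ t * I0 := hiter t
        _ = lam2 ^ t * I0 := by rw [hμeq]
        _ ≤ ε ^ 2 * ∑ k, (x0 k) ^ 2 :=
            mul_le_mul hpow hI0le hI0nonneg (by positivity)
  exact main
end
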